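/- arXiv:2404.17828 — 4 statements merged into one kernel-verified Lean document; each statement's English description precedes it below -/
import Mathlib

section
/- For every real q ≥ 1 and every natural number n, Γ(n/q + 1) ≤ (n!)^{1/q}. -/
theorem gamma_div_le_factorial_rpow (q : ℝ) (hq : 1 ≤ q) (n : ℕ) :
    Real.Gamma ((n : ℝ) / q + 1) ≤ ((n.factorial : ℝ)) ^ (1 / q) := by
  have hq0 : 0 < q := lt_of_lt_of_le one_pos hq
  have ha : (0:ℝ) ≤ 1 - 1/q := by
    have : 1/q ≤ 1 := by
      rw [div_le_one hq0]; exact hq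
    linarith
  have hb : (0:ℝ) ≤ 1/q := by positivity
  have hab : (1 - 1/q) + 1/q = 1 := by ring
  have h1 : (1:ℝ) ∈ Set.Ioi (0:ℝ) := by norm_num
  have h2 : ((n:ℝ) + 1) ∈ Set.Ioi (0:ℝ) := by simp; positivity
  have key := Real.convexOn_log_Gamma.2 h1 h2 ha hb hab
  have hx : (1 - 1/q) • (1:ℝ) + (1/q) • ((n:ℝ) + 1) = (n:ℝ)/q + 1 := by
    simp only [smul_eq_mul]; ring
  rw [hx] at key
  simp only [Function.comp_apply, Real.Gamma_one, Real.log_one, smul_eq_mul, mul_zero,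
    zero_add] at key
  rw [Real.Gamma_nat_eq_factorial] at key
  have hfac : (0:ℝ) < n.factorial := by positivity
  have hG : 0 < Real.Gamma ((n:ℝ)/q + 1) := Real.Gamma_pos_of_pos (by positivity)
  calc Real.Gamma ((n:ℝ)/q + 1) = Real.exp (Real.log (Real.Gamma ((n:ℝ)/q + 1))) :=
        (Real.exp_log hG).symm
    _ ≤ Real.exp (1/q * Real.log n.factorial) := Real.exp_le_exp.mpr key
    _ = ((n.factorial : ℝ)) ^ (1/q) := by
        rw [mul_comm, Real.exp_mul, Real.exp_log hfac]
end

section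
/- Let a > 1 and C_j(n,a) = C(n,j)·((1+a)/2)^{n-j}·((1-a)/2)^j. Then for every fixed x ∈ ℝ, the sequence F_n(x) = Σ_{j=0}^n C_j(n,a) e^{i(1-2j/n)x} converges to e^{iax} as n → ∞. -/
/-!
With `p = (1 + a) / 2`, `q = (1 - a) / 2` and `φ t = p e^{ixt} + q e^{-ixt}`, the binomial theorem
gives `F_n(x) = φ(1/n)^n`. Since `φ 0 = p + q = 1` and `φ'(0) = i(p - q)x = iax`, the sequence
`φ(1/n)^n = (1 + φ'(0)/n + o(1/n))^n` tends to `e^{φ'(0)}`.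
-/

open Filter Topology Complex

theorem tendsto_natCast_smul_sub_of_hasDerivAt {𝕜 F : Type*} [RCLike 𝕜] [NormedAddCommGroup F]
    [NormedSpace 𝕜 F] {f : 𝕜 → F} {f' : F} (hf : HasDerivAt f f' 0) :
    Tendsto (fun n : ℕ ↦ (n : 𝕜) • (f (n : 𝕜)⁻¹ - f 0)) atTop (𝓝 f') := by
  have hinv : Tendsto (fun n : ℕ ↦ (n : 𝕜)⁻¹) atTop (𝓝[≠] 0) :=
    tendsto_nhdsWithin_iff.2 ⟨tendsto_inv_atTop_nhds_zero_nat,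
      (eventually_ne_atTop 0).mono fun n hn ↦ by simpa using hn⟩
  refine (hf.tendsto_slope_zero.comp hinv).congr fun n ↦ ?_
  simp only [Function.comp_apply, zero_add, inv_inv]

theorem Complex.tendsto_pow_inv_natCast_of_hasDerivAt {φ : ℂ → ℂ} {d : ℂ}
    (hφ : HasDerivAt φ d 0) (hφ0 : φ 0 = 1) :
    Tendsto (fun n : ℕ ↦ φ (n : ℂ)⁻¹ ^ n) atTop (𝓝 (exp d)) := by
  have hg : Tendsto (fun n : ℕ ↦ (n : ℂ) * (φ (n : ℂ)⁻¹ - 1)) atTop (𝓝 d) := by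
    simpa [hφ0] using tendsto_natCast_smul_sub_of_hasDerivAt hφ
  simpa using tendsto_one_add_pow_exp_of_tendsto hg

theorem sum_choose_mul_exp_eq_pow (p q : ℂ) (x : ℝ) {n : ℕ} (hn : n ≠ 0) :
    ∑ j ∈ Finset.range (n + 1),
        ((n.choose j : ℂ) * p ^ (n - j) * q ^ j) * exp (I * (1 - 2 * (j : ℂ) / n) * x) =
      (p * exp (I * x * (n : ℂ)⁻¹) + q * exp (-(I * x) * (n : ℂ)⁻¹)) ^ n := by
  rw [add_comm (p * _), add_pow]
  refine Finset.sum_congr rfl fun j hj ↦ ?_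
  have hjn : j ≤ n := Nat.lt_succ_iff.1 (Finset.mem_range.1 hj)
  have hexp : exp (I * (1 - 2 * (j : ℂ) / n) * x) =
      exp (-(I * x) * (n : ℂ)⁻¹) ^ j * exp (I * x * (n : ℂ)⁻¹) ^ (n - j) := by
    rw [← exp_nat_mul, ← exp_nat_mul, ← exp_add]
    congr 1
    push_cast [Nat.cast_sub hjn]
    field_simp
    ring
  rw [hexp]
  ring

theorem superoscillation_tendsto_general (a : ℝ) (x : ℝ) :
    Filter.Tendsto
      (fun n : ℕ =>
        ∑ j ∈ Finset.range (n + 1),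
          ((n.choose j : ℂ) * (((1 : ℂ) + a) / 2) ^ (n - j) * (((1 : ℂ) - a) / 2) ^ j)
            * Complex.exp (Complex.I * (1 - 2 * (j : ℂ) / (n : ℂ)) * (x : ℂ)))
      Filter.atTop (nhds (Complex.exp (Complex.I * (a : ℂ) * (x : ℂ)))) := by
  set p : ℂ := (1 + a) / 2
  set q : ℂ := (1 - a) / 2
  set φ : ℂ → ℂ := fun t ↦ p * exp (I * x * t) + q * exp (-(I * x) * t)
  have hexp (c : ℂ) : HasDerivAt (fun t ↦ exp (c * t)) c 0 := by
    simpa using ((hasDerivAt_id 0).const_mul c).cexp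
  have hφ : HasDerivAt φ (I * a * x) 0 :=
    (((hexp (I * x)).const_mul p).add ((hexp (-(I * x))).const_mul q)).congr_deriv (by ring)
  have hφ0 : φ 0 = 1 := by simp only [φ, p, q, mul_zero, exp_zero]; ring
  refine (tendsto_pow_inv_natCast_of_hasDerivAt hφ hφ0).congr' ?_
  filter_upwards [eventually_ne_atTop 0] with n hn
  exact (sum_choose_mul_exp_eq_pow p q x hn).symm

theorem superoscillation_tendsto (a : ℝ) (ha : 1 < a) (x : ℝ) :
    Filter.Tendsto
      (fun n : ℕ =>
        ∑ j ∈ Finset.range (n + 1),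
          ((n.choose j : ℂ) * (((1 : ℂ) + a) / 2) ^ (n - j) * (((1 : ℂ) - a) / 2) ^ j)
            * Complex.exp (Complex.I * (1 - 2 * (j : ℂ) / (n : ℂ)) * (x : ℂ)))
      Filter.atTop (nhds (Complex.exp (Complex.I * (a : ℂ) * (x : ℂ)))) :=
  superoscillation_tendsto_general a x
end

section
/- Let b > 0 and let g(λ) = Σ_u g_u λ^u be an entire function. If f satisfies |f_j| ≤ C_f b^j/j!, then for all m, ℓ ∈ ℕ with ℓ ≤ m and all w ∈ ℂ: Σ over multi-indices (u_1,…,u_{m-ℓ}, v_1,…,v_ℓ, k) of |g_{u_1}|⋯|g_{u_{m-ℓ}}| |h_{v_1}|⋯|h_{v_ℓ}| |f_{Σu+Σv+k}| (Σu+Σv+k)!/k! · |w|^k ≤ C_f (Σ_u |g_u| b^u)^{m-ℓ} (Σ_v |h_v| b^v)^ℓ e^{b|w|}. -/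
open scoped Nat

set_option maxHeartbeats 1000000 in
private lemma prod_tsum_fin {a : ℕ → ℝ} (ha0 : ∀ u, 0 ≤ a u) (ha : Summable a) :
    ∀ n : ℕ, Summable (fun x : Fin n → ℕ => ∏ i, a (x i)) ∧
      (∑' x : Fin n → ℕ, ∏ i, a (x i)) = (∑' u, a u) ^ n := by
  intro n
  induction n with
  | zero =>
      refine ⟨Summable.of_finite, ?_⟩
      have h0 : (∑' x : Fin 0 → ℕ, ∏ i, a (x i)) = ∏ i : Fin 0, a ((default : Fin 0 → ℕ) i) :=
        tsum_eq_single default fun x hx => absurd (Subsingleton.elim x default) hx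
      simp [h0]
  | succ n ih =>
      let e : ℕ × (Fin n → ℕ) ≃ (Fin (n + 1) → ℕ) := Fin.consEquiv fun _ => ℕ
      have ecoe : ∀ p : ℕ × (Fin n → ℕ), e p = Fin.cons p.1 p.2 := fun _ => rfl
      have hkey : ∀ p : ℕ × (Fin n → ℕ),
          (∏ i, a ((Fin.cons p.1 p.2 : Fin (n+1) → ℕ) i)) = a p.1 * ∏ i, a (p.2 i) := by
        intro p
        rw [show (fun i => a ((Fin.cons p.1 p.2 : Fin (n+1) → ℕ) i))
            = Fin.cons (a p.1) (fun i => a (p.2 i)) from funext fun i => by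
              refine Fin.cases ?_ ?_ i <;> simp]
        exact Fin.prod_cons _ _
      have hsum : Summable fun p : ℕ × (Fin n → ℕ) => a p.1 * ∏ i, a (p.2 i) := by
        have := Summable.mul_of_nonneg (ι := ℕ) (ι' := Fin n → ℕ) ha ih.1 (fun u => ha0 u)
          (fun x => Finset.prod_nonneg fun i _ => ha0 _)
        exact this
      have hsum' : Summable (fun x : Fin (n+1) → ℕ => ∏ i, a (x i)) := by
        rw [← e.summable_iff]
        exact hsum.congr fun p => by rw [Function.comp_apply, ecoe p]; exact (hkey p).symm
      refine ⟨hsum', ?_⟩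
      rw [← e.tsum_eq]
      have : (∑' p : ℕ × (Fin n → ℕ), a p.1 * ∏ i, a (p.2 i))
          = (∑' u, a u) * ∑' x : Fin n → ℕ, ∏ i, a (x i) :=
        (Summable.tsum_mul_tsum ha ih.1 hsum).symm
      calc (∑' p : ℕ × (Fin n → ℕ), ∏ i, a ((e p) i))
          = ∑' p : ℕ × (Fin n → ℕ), a p.1 * ∏ i, a (p.2 i) := by
            exact tsum_congr fun p => by rw [ecoe p]; exact hkey p
        _ = (∑' u, a u) * (∑' u, a u) ^ n := by rw [this, ih.2]
        _ = (∑' u, a u) ^ (n + 1) := (pow_succ' _ _).symm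

theorem iterated_operator_coeff_bound (g h f : ℕ → ℂ) (C b : ℝ) (hC : 0 < C) (hb : 0 < b)
    (hf : ∀ j : ℕ, ‖f j‖ ≤ C * b ^ j / (j.factorial : ℝ))
    (hg : Summable fun u : ℕ => ‖g u‖ * b ^ u)
    (hh : Summable fun v : ℕ => ‖h v‖ * b ^ v)
    (m ℓ : ℕ) (hℓm : ℓ ≤ m) (w : ℂ) :
    ∑' p : (Fin (m - ℓ) → ℕ) × (Fin ℓ → ℕ) × ℕ,
        (∏ i, ‖g (p.1 i)‖) * (∏ j, ‖h (p.2.1 j)‖) *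
          ‖f (∑ i, p.1 i + ∑ j, p.2.1 j + p.2.2)‖ *
          (((∑ i, p.1 i + ∑ j, p.2.1 j + p.2.2).factorial : ℝ) / (p.2.2.factorial : ℝ)) *
          ‖w‖ ^ p.2.2
      ≤ C * (∑' u : ℕ, ‖g u‖ * b ^ u) ^ (m - ℓ) * (∑' v : ℕ, ‖h v‖ * b ^ v) ^ ℓ *
          Real.exp (b * ‖w‖) := by
  set a : ℕ → ℝ := fun u => ‖g u‖ * b ^ u with ha_def
  set c : ℕ → ℝ := fun v => ‖h v‖ * b ^ v with hc_def
  set d : ℕ → ℝ := fun k => (b * ‖w‖) ^ k / (k.factorial : ℝ) with hd_def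
  have ha0 : ∀ u, 0 ≤ a u := fun u => mul_nonneg (norm_nonneg _) (pow_nonneg hb.le _)
  have hc0 : ∀ v, 0 ≤ c v := fun v => mul_nonneg (norm_nonneg _) (pow_nonneg hb.le _)
  have hd0 : ∀ k, 0 ≤ d k := fun k => div_nonneg
    (pow_nonneg (mul_nonneg hb.le (norm_nonneg _)) _) (Nat.cast_nonneg _)
  have hdsum : Summable d := Real.summable_pow_div_factorial (b * ‖w‖)
  obtain ⟨hAs, hAe⟩ := prod_tsum_fin ha0 hg (m - ℓ)
  obtain ⟨hBs, hBe⟩ := prod_tsum_fin hc0 hh ℓ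
  -- the dominating function
  set G : (Fin (m - ℓ) → ℕ) × (Fin ℓ → ℕ) × ℕ → ℝ :=
    fun p => C * ((∏ i, a (p.1 i)) * ((∏ j, c (p.2.1 j)) * d p.2.2)) with hG_def
  have hGinner : Summable fun q : (Fin ℓ → ℕ) × ℕ => (∏ j, c (q.1 j)) * d q.2 := by
    have := Summable.mul_of_nonneg (ι := Fin ℓ → ℕ) (ι' := ℕ) hBs hdsum
      (fun x => Finset.prod_nonneg fun j _ => hc0 _) (fun k => hd0 k)
    exact this
  have hGsum0 : Summable fun p : (Fin (m - ℓ) → ℕ) × (Fin ℓ → ℕ) × ℕ =>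
      (∏ i, a (p.1 i)) * ((∏ j, c (p.2.1 j)) * d p.2.2) := by
    have := Summable.mul_of_nonneg (ι := Fin (m - ℓ) → ℕ) (ι' := (Fin ℓ → ℕ) × ℕ) hAs hGinner
      (fun x => Finset.prod_nonneg fun i _ => ha0 _)
      (fun q => mul_nonneg (Finset.prod_nonneg fun j _ => hc0 _) (hd0 _))
    exact this
  have hGsum : Summable G := hGsum0.mul_left C
  have hle : ∀ p : (Fin (m - ℓ) → ℕ) × (Fin ℓ → ℕ) × ℕ,
      (∏ i, ‖g (p.1 i)‖) * (∏ j, ‖h (p.2.1 j)‖) *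
          ‖f (∑ i, p.1 i + ∑ j, p.2.1 j + p.2.2)‖ *
          (((∑ i, p.1 i + ∑ j, p.2.1 j + p.2.2).factorial : ℝ) / (p.2.2.factorial : ℝ)) *
          ‖w‖ ^ p.2.2 ≤ G p := by
    intro p
    set N : ℕ := ∑ i, p.1 i + ∑ j, p.2.1 j + p.2.2 with hN
    have hNfac : (0 : ℝ) < (N.factorial : ℝ) := by exact_mod_cast N.factorial_pos
    have hkfac : (0 : ℝ) < (p.2.2.factorial : ℝ) := by exact_mod_cast p.2.2.factorial_pos
    have h1 : ‖f N‖ * ((N.factorial : ℝ) / (p.2.2.factorial : ℝ))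
        ≤ C * b ^ N / (p.2.2.factorial : ℝ) := by
      have := mul_le_mul_of_nonneg_right (hf N)
        (le_of_lt (div_pos hNfac hkfac))
      calc ‖f N‖ * ((N.factorial : ℝ) / (p.2.2.factorial : ℝ))
          ≤ C * b ^ N / (N.factorial : ℝ) * ((N.factorial : ℝ) / (p.2.2.factorial : ℝ)) := this
        _ = C * b ^ N / (p.2.2.factorial : ℝ) := by field_simp
    have hprodg : (0 : ℝ) ≤ ∏ i, ‖g (p.1 i)‖ := Finset.prod_nonneg fun i _ => norm_nonneg _
    have hprodh : (0 : ℝ) ≤ ∏ j, ‖h (p.2.1 j)‖ := Finset.prod_nonneg fun j _ => norm_nonneg _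
    have h2 : (∏ i, ‖g (p.1 i)‖) * (∏ j, ‖h (p.2.1 j)‖) * ‖f N‖ *
          ((N.factorial : ℝ) / (p.2.2.factorial : ℝ)) * ‖w‖ ^ p.2.2
        ≤ (∏ i, ‖g (p.1 i)‖) * (∏ j, ‖h (p.2.1 j)‖) *
          (C * b ^ N / (p.2.2.factorial : ℝ)) * ‖w‖ ^ p.2.2 := by
      have := mul_le_mul_of_nonneg_left h1 (mul_nonneg hprodg hprodh)
      have := mul_le_mul_of_nonneg_right this (pow_nonneg (norm_nonneg w) p.2.2)
      calc (∏ i, ‖g (p.1 i)‖) * (∏ j, ‖h (p.2.1 j)‖) * ‖f N‖ *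
            ((N.factorial : ℝ) / (p.2.2.factorial : ℝ)) * ‖w‖ ^ p.2.2
          = (∏ i, ‖g (p.1 i)‖) * (∏ j, ‖h (p.2.1 j)‖) *
            (‖f N‖ * ((N.factorial : ℝ) / (p.2.2.factorial : ℝ))) * ‖w‖ ^ p.2.2 := by ring
        _ ≤ (∏ i, ‖g (p.1 i)‖) * (∏ j, ‖h (p.2.1 j)‖) *
            (C * b ^ N / (p.2.2.factorial : ℝ)) * ‖w‖ ^ p.2.2 := this
    refine h2.trans (le_of_eq ?_)
    have hbN : b ^ N = (∏ i, b ^ (p.1 i)) * (∏ j, b ^ (p.2.1 j)) * b ^ p.2.2 := by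
      rw [hN, pow_add, pow_add, Finset.prod_pow_eq_pow_sum, Finset.prod_pow_eq_pow_sum]
    rw [hG_def]
    simp only [ha_def, hc_def, hd_def]
    rw [hbN, Finset.prod_mul_distrib, Finset.prod_mul_distrib, mul_pow]
    field_simp
  have hsummable : Summable fun p : (Fin (m - ℓ) → ℕ) × (Fin ℓ → ℕ) × ℕ =>
      (∏ i, ‖g (p.1 i)‖) * (∏ j, ‖h (p.2.1 j)‖) *
        ‖f (∑ i, p.1 i + ∑ j, p.2.1 j + p.2.2)‖ *
        (((∑ i, p.1 i + ∑ j, p.2.1 j + p.2.2).factorial : ℝ) / (p.2.2.factorial : ℝ)) *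
        ‖w‖ ^ p.2.2 := by
    refine Summable.of_nonneg_of_le (fun p => ?_) hle hGsum
    have : (0:ℝ) ≤ ((∑ i, p.1 i + ∑ j, p.2.1 j + p.2.2).factorial : ℝ) / (p.2.2.factorial : ℝ) :=
      div_nonneg (Nat.cast_nonneg _) (Nat.cast_nonneg _)
    positivity
  have hGt : ∑' p, G p = C * (∑' u : ℕ, a u) ^ (m - ℓ) * (∑' v : ℕ, c v) ^ ℓ *
      Real.exp (b * ‖w‖) := by
    have hexp : Real.exp (b * ‖w‖) = ∑' k : ℕ, d k := by
      rw [Real.exp_eq_exp_ℝ, NormedSpace.exp_eq_tsum_div]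
    have e1 : (∑' q : (Fin ℓ → ℕ) × ℕ, (∏ j, c (q.1 j)) * d q.2)
        = (∑' x : Fin ℓ → ℕ, ∏ j, c (x j)) * ∑' k, d k :=
      (Summable.tsum_mul_tsum hBs hdsum hGinner).symm
    have e2 : (∑' p : (Fin (m - ℓ) → ℕ) × (Fin ℓ → ℕ) × ℕ,
          (∏ i, a (p.1 i)) * ((∏ j, c (p.2.1 j)) * d p.2.2))
        = (∑' x : Fin (m - ℓ) → ℕ, ∏ i, a (x i)) *
          ∑' q : (Fin ℓ → ℕ) × ℕ, (∏ j, c (q.1 j)) * d q.2 :=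
      (Summable.tsum_mul_tsum hAs hGinner hGsum0).symm
    rw [hG_def]
    rw [tsum_mul_left, e2, e1, hAe, hBe, hexp]
    ring
  calc _ ≤ ∑' p, G p := Summable.tsum_le_tsum hle hsummable hGsum
    _ = _ := hGt
end

section
/- Let g be an entire function that is holomorphic on ℂ and satisfies |g(Re^{iα})| ≤ q(R) e^{cR} e^{-γR² sin(2α)} · R for all R > 0, α ∈ [0, π/4], where γ > 0, c > 0 and q has polynomial growth. If additionally g is entire, then ∫_0^∞ g(u) du = e^{iπ/4} ∫_0^∞ g(u e^{iπ/4}) du, provided both improper integrals converge absolutely. (Fresnel rotation of the contour by π/4.) -/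
/-!
An entire `f` has a primitive `F`, so for every radius `R` the integrals of `f` along `[0, R]`,
along the rotated segment `[0, R e^{iθ}]` and along the arc joining their endpoints all reduce to
values of `F`; letting `R → ∞` rotates the half-line of integration as soon as the arc integrals
tend to zero.

The assumed bound does not force this by itself: near `α = 0` the factor `e^{-γR² sin 2α}` gives
no decay against `e^{cR}`. Multiplying `g` by the Gaussian `e^{-ηz²}`, whose modulus
`e^{-ηR² cos 2α}` decays exactly where `sin 2α` is small, makes the integrand `O(e^{-min(γ,η) R²})`
on the whole arc. The Gaussian has modulus at most `1` on the real axis and exactly `1` on the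
ray `arg z = π/4` (there `z²` is purely imaginary), so dominated convergence lets `η → 0`.
-/

open MeasureTheory Set Filter Topology Complex
open scoped Real

variable {E : Type*} [NormedAddCommGroup E] [NormedSpace ℂ E]

noncomputable def arcIntegral (f : ℂ → E) (R θ : ℝ) : E :=
  ∫ α in 0..θ, (circleMap 0 R α * I) • f (circleMap 0 R α)

namespace Differentiable

variable [CompleteSpace E] {f : ℂ → E} (hf : Differentiable ℂ f)
include hf

theorem integral_eq_rotated_sub_arcIntegral (R θ : ℝ) :
    ∫ u in 0..R, f u
      = cexp (θ * I) • (∫ u in 0..R, f (u * cexp (θ * I))) - arcIntegral f R θ := by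
  obtain ⟨F, hF⟩ := hf.isExactOn_univ
  have hcont := hf.continuous
  have ray (w : ℂ) : ∫ u in 0..R, w • f (u * w) = F (R * w) - F 0 := by
    rw [show F 0 = F ((0 : ℝ) * w) by simp]
    refine intervalIntegral.integral_eq_sub_of_hasDerivAt (f := fun u : ℝ => F (u * w))
      (fun u _ => ?_)
      ((show Continuous fun u : ℝ => w • f (u * w) by fun_prop).intervalIntegrable _ _)
    exact (hF _ (mem_univ _)).scomp u (hasDerivAt_mul_const w).comp_ofReal
  have arc : arcIntegral f R θ = F (circleMap 0 R θ) - F (circleMap 0 R 0) := by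
    refine intervalIntegral.integral_eq_sub_of_hasDerivAt
      (f := F ∘ circleMap 0 R) (fun α _ => ?_) (Continuous.intervalIntegrable ?_ _ _)
    · exact (hF _ (mem_univ _)).scomp α (hasDerivAt_circleMap 0 R α)
    · have := continuous_circleMap 0 R
      fun_prop
  have hreal := ray 1
  simp only [mul_one, one_smul] at hreal
  rw [← intervalIntegral.integral_smul, ray, hreal, arc]
  simp [circleMap]

theorem integral_Ioi_eq_rotated_of_tendsto_arcIntegral (θ : ℝ)
    (h₁ : IntegrableOn (fun u : ℝ => f u) (Ioi 0))
    (h₂ : IntegrableOn (fun u : ℝ => f (u * cexp (θ * I))) (Ioi 0))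
    (harc : Tendsto (arcIntegral f · θ) atTop (𝓝 0)) :
    ∫ u in Ioi (0 : ℝ), f u = cexp (θ * I) • ∫ u in Ioi (0 : ℝ), f (u * cexp (θ * I)) := by
  have hlim := ((intervalIntegral_tendsto_integral_Ioi 0 h₂ tendsto_id).const_smul
    (cexp (θ * I))).sub harc
  rw [sub_zero] at hlim
  exact tendsto_nhds_unique (intervalIntegral_tendsto_integral_Ioi 0 h₁ tendsto_id)
    (hlim.congr fun R => (hf.integral_eq_rotated_sub_arcIntegral R θ).symm)

end Differentiable

theorem norm_arcIntegral_le {f : ℂ → E} {R θ B : ℝ} (hθ : 0 ≤ θ)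
    (hB : ∀ α ∈ Icc 0 θ, ‖f (circleMap 0 R α)‖ ≤ B) :
    ‖arcIntegral f R θ‖ ≤ θ * (|R| * B) := by
  have h := intervalIntegral.norm_integral_le_of_norm_le_const (a := 0) (b := θ)
    (C := |R| * B) (f := fun α => (circleMap 0 R α * I) • f (circleMap 0 R α)) fun α hα => by
      rw [uIoc_of_le hθ] at hα
      rw [norm_smul, norm_mul, norm_circleMap_zero, norm_I, mul_one]
      exact mul_le_mul_of_nonneg_left (hB α (Ioc_subset_Icc_self hα)) (abs_nonneg R)
  rwa [sub_zero, abs_of_nonneg hθ, mul_comm] at h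

theorem norm_cexp_neg_ofReal_mul_sq (η : ℝ) (z : ℂ) :
    ‖cexp (-η * z ^ 2)‖ = rexp (-η * (z ^ 2).re) := by
  rw [norm_exp, ← ofReal_neg, re_ofReal_mul]

theorem norm_mul_cexp_neg_mul_sq_le {η : ℝ} (hη : 0 ≤ η) {z : ℂ} (hz : 0 ≤ (z ^ 2).re) (a : ℂ) :
    ‖a * cexp (-η * z ^ 2)‖ ≤ ‖a‖ := by
  rw [norm_mul, norm_cexp_neg_ofReal_mul_sq]
  exact mul_le_of_le_one_right (norm_nonneg a)
    (Real.exp_le_one_iff.2 (by nlinarith))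

section Damping

variable {α : Type*} [MeasurableSpace α] {μ : Measure α} {φ z : α → ℂ}

theorem MeasureTheory.Integrable.mul_cexp_neg_mul_sq (hφ : Integrable φ μ)
    (hz : AEStronglyMeasurable z μ) (hre : ∀ x, 0 ≤ (z x ^ 2).re) {η : ℝ} (hη : 0 ≤ η) :
    Integrable (fun x => φ x * cexp (-η * z x ^ 2)) μ :=
  hφ.mono (hφ.1.mul (by fun_prop)) (ae_of_all _ fun x => norm_mul_cexp_neg_mul_sq_le hη (hre x) _)

theorem tendsto_integral_mul_cexp_neg_mul_sq (hφ : Integrable φ μ)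
    (hz : AEStronglyMeasurable z μ) (hre : ∀ x, 0 ≤ (z x ^ 2).re) :
    Tendsto (fun η : ℝ => ∫ x, φ x * cexp (-η * z x ^ 2) ∂μ) (𝓝[>] 0) (𝓝 (∫ x, φ x ∂μ)) := by
  refine tendsto_integral_filter_of_dominated_convergence (‖φ ·‖)
    (Eventually.of_forall fun η => hφ.1.mul (by fun_prop)) ?_ hφ.norm (ae_of_all _ fun x => ?_)
  · filter_upwards [self_mem_nhdsWithin] with η hη
    exact ae_of_all _ fun x => norm_mul_cexp_neg_mul_sq_le (le_of_lt hη) (hre x) _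
  · have hcont : Continuous fun η : ℝ => φ x * cexp (-η * z x ^ 2) := by fun_prop
    simpa using (hcont.tendsto 0).mono_left nhdsWithin_le_nhds

end Damping

theorem min_le_mul_sin_add_mul_cos {γ η x : ℝ} (hγ : 0 ≤ γ) (hη : 0 ≤ η)
    (hx : x ∈ Icc 0 (π / 2)) : min γ η ≤ γ * Real.sin x + η * Real.cos x := by
  have hsin : 0 ≤ Real.sin x :=
    Real.sin_nonneg_of_nonneg_of_le_pi hx.1 (by linarith [hx.2, Real.pi_pos])
  have hcos : 0 ≤ Real.cos x := Real.cos_nonneg_of_mem_Icc ⟨by linarith [hx.1, Real.pi_pos], hx.2⟩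
  have hsum : 1 ≤ Real.sin x + Real.cos x := by nlinarith [Real.sin_sq_add_cos_sq x]
  nlinarith [min_le_left γ η, min_le_right γ η, le_min hγ hη]

theorem circleMap_zero_sq_re (R α : ℝ) :
    (circleMap 0 R α ^ 2).re = R ^ 2 * Real.cos (2 * α) := by
  rw [circleMap_zero, mul_pow, ← exp_nat_mul, ← ofReal_pow]
  push_cast
  rw [show 2 * ((α : ℂ) * I) = ((2 * α : ℝ) : ℂ) * I by push_cast; ring, ← ofReal_pow,
    re_ofReal_mul, exp_ofReal_mul_I_re]

theorem norm_mul_cexp_neg_mul_sq_circleMap_le {g : ℂ → ℂ} {γ η R α A : ℝ} (hγ : 0 ≤ γ)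
    (hη : 0 ≤ η) (hα : α ∈ Icc 0 (π / 4))
    (hg : ‖g (circleMap 0 R α)‖ ≤ A * rexp (-γ * R ^ 2 * Real.sin (2 * α))) :
    ‖g (circleMap 0 R α) * cexp (-η * circleMap 0 R α ^ 2)‖
      ≤ |A| * rexp (-min γ η * R ^ 2) := by
  have hmin := min_le_mul_sin_add_mul_cos hγ hη (x := 2 * α)
    ⟨by linarith [hα.1], by linarith [hα.2]⟩
  calc ‖g (circleMap 0 R α) * cexp (-η * circleMap 0 R α ^ 2)‖
      = ‖g (circleMap 0 R α)‖ * rexp (-η * (R ^ 2 * Real.cos (2 * α))) := by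
        rw [norm_mul, norm_cexp_neg_ofReal_mul_sq, circleMap_zero_sq_re]
    _ ≤ |A| * rexp (-γ * R ^ 2 * Real.sin (2 * α))
          * rexp (-η * (R ^ 2 * Real.cos (2 * α))) := by
        gcongr
        exact hg.trans (by gcongr; exact le_abs_self A)
    _ = |A| * rexp (-(γ * Real.sin (2 * α) + η * Real.cos (2 * α)) * R ^ 2) := by
        rw [mul_assoc, ← Real.exp_add]; ring_nf
    _ ≤ |A| * rexp (-min γ η * R ^ 2) := by gcongr

theorem tendsto_one_add_pow_mul_exp_sub_mul_sq (n : ℕ) (a : ℝ) {δ : ℝ} (hδ : 0 < δ) :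
    Tendsto (fun R : ℝ => (1 + R) ^ n * rexp (a * R - δ * R ^ 2)) atTop (𝓝 0) := by
  have hquad : Tendsto (fun R : ℝ => (n + a) * R - δ * R ^ 2) atTop atBot := by
    have hlin : Tendsto (fun R : ℝ => (n + a) - δ * R) atTop atBot :=
      tendsto_atBot_add_const_left _ _
        (tendsto_neg_atTop_atBot.comp (tendsto_id.const_mul_atTop hδ))
    exact (tendsto_id.atTop_mul_atBot₀ hlin).congr fun R => by simp only [id]; ring
  refine tendsto_of_tendsto_of_tendsto_of_le_of_le' tendsto_const_nhds
    (Real.tendsto_exp_atBot.comp hquad) ?_ ?_ <;>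
    filter_upwards [eventually_ge_atTop 0] with R hR
  · positivity
  · have hpow : (1 + R) ^ n ≤ rexp (n * R) := by
      rw [Real.exp_nat_mul]
      exact pow_le_pow_left₀ (by linarith) (by linarith [Real.add_one_le_exp R]) n
    calc (1 + R) ^ n * rexp (a * R - δ * R ^ 2)
        ≤ rexp (n * R) * rexp (a * R - δ * R ^ 2) := by gcongr
      _ = rexp ((n + a) * R - δ * R ^ 2) := by rw [← Real.exp_add]; ring_nf

theorem tendsto_arcIntegral_mul_cexp_neg_mul_sq {g : ℂ → ℂ} {q : ℝ → ℝ} {γ η c C : ℝ} {k : ℕ}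
    (hγ : 0 < γ) (hη : 0 < η) (hq : ∀ R : ℝ, 0 ≤ R → |q R| ≤ C * (1 + R) ^ k)
    (hbound : ∀ R : ℝ, 0 < R → ∀ α ∈ Icc (0 : ℝ) (π / 4), ‖g (circleMap 0 R α)‖
      ≤ q R * rexp (c * R) * rexp (-γ * R ^ 2 * Real.sin (2 * α)) * R) :
    Tendsto (arcIntegral (fun z => g z * cexp (-η * z ^ 2)) · (π / 4)) atTop (𝓝 0) := by
  have hδ : 0 < min γ η := lt_min hγ hη
  refine squeeze_zero_norm' ?_
    (by simpa using (tendsto_one_add_pow_mul_exp_sub_mul_sq (k + 2) c hδ).const_mul (π / 4 * C))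
  filter_upwards [eventually_gt_atTop 0] with R hR
  have hqR := hq R hR.le
  have hR2 : R ^ 2 ≤ (1 + R) ^ 2 := by nlinarith
  calc ‖arcIntegral (fun z => g z * cexp (-η * z ^ 2)) R (π / 4)‖
      ≤ π / 4 * (|R| * (|q R * rexp (c * R) * R| * rexp (-min γ η * R ^ 2))) :=
        norm_arcIntegral_le (by positivity) fun α hα =>
          norm_mul_cexp_neg_mul_sq_circleMap_le hγ.le hη.le hα
            ((hbound R hR α hα).trans_eq (by ring))
    _ = π / 4 * (rexp (c * R - min γ η * R ^ 2) * (|q R| * R ^ 2)) := by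
        rw [abs_of_pos hR, abs_mul, abs_mul, abs_of_pos (Real.exp_pos _), abs_of_pos hR,
          sub_eq_add_neg, Real.exp_add]
        ring_nf
    _ ≤ π / 4 * (rexp (c * R - min γ η * R ^ 2) * (C * (1 + R) ^ k * (1 + R) ^ 2)) := by
        have hpoly := mul_le_mul hqR hR2 (sq_nonneg R) ((abs_nonneg _).trans hqR)
        exact mul_le_mul_of_nonneg_left (mul_le_mul_of_nonneg_left hpoly (Real.exp_pos _).le)
          (by positivity)
    _ = π / 4 * C * ((1 + R) ^ (k + 2) * rexp (c * R - min γ η * R ^ 2)) := by ring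

theorem fresnel_contour_rotation_general (g : ℂ → ℂ) (hg : Differentiable ℂ g)
    (γ c : ℝ) (hγ : 0 < γ) (q : ℝ → ℝ)
    (hq : ∃ C : ℝ, ∃ k : ℕ, ∀ R : ℝ, 0 ≤ R → |q R| ≤ C * (1 + R) ^ k)
    (hbound : ∀ R : ℝ, 0 < R → ∀ α ∈ Set.Icc (0 : ℝ) (Real.pi / 4),
        ‖g ((R : ℂ) * Complex.exp (Complex.I * (α : ℂ)))‖
          ≤ q R * Real.exp (c * R) * Real.exp (-γ * R ^ 2 * Real.sin (2 * α)) * R)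
    (h1 : MeasureTheory.IntegrableOn (fun u : ℝ => g (u : ℂ)) (Set.Ioi 0))
    (h2 : MeasureTheory.IntegrableOn
        (fun u : ℝ => g ((u : ℂ) * Complex.exp (Complex.I * (Real.pi : ℂ) / 4))) (Set.Ioi 0)) :
    ∫ u in Set.Ioi (0 : ℝ), g (u : ℂ)
      = Complex.exp (Complex.I * (Real.pi : ℂ) / 4) *
          ∫ u in Set.Ioi (0 : ℝ), g ((u : ℂ) * Complex.exp (Complex.I * (Real.pi : ℂ) / 4)) := by
  obtain ⟨C, k, hq⟩ := hq
  set w := cexp ((π / 4 : ℝ) * I)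
  have hw : cexp (I * π / 4) = w := by
    rw [show I * π / 4 = ((π / 4 : ℝ) : ℂ) * I by push_cast; ring]
  have hw2 : w ^ 2 = I := by
    rw [← exp_nat_mul, show ((2 : ℕ) : ℂ) * (((π / 4 : ℝ) : ℂ) * I) = π / 2 * I by push_cast; ring,
      exp_pi_div_two_mul_I]
  rw [hw] at h2 ⊢
  have hre₁ (u : ℝ) : 0 ≤ ((u : ℂ) ^ 2).re := by rw [← ofReal_pow, ofReal_re]; positivity
  have hre₂ (u : ℝ) : 0 ≤ (((u : ℂ) * w) ^ 2).re := by
    rw [mul_pow, hw2, ← ofReal_pow, re_ofReal_mul, I_re, mul_zero]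
  have hdamped : ∀ η : ℝ, 0 < η → ∫ u in Ioi (0 : ℝ), g u * cexp (-η * (u : ℂ) ^ 2)
      = w * ∫ u in Ioi (0 : ℝ), g (u * w) * cexp (-η * ((u : ℂ) * w) ^ 2) := fun η hη =>
    Differentiable.integral_Ioi_eq_rotated_of_tendsto_arcIntegral
      (show Differentiable ℂ fun z => g z * cexp (-η * z ^ 2) by fun_prop) (π / 4)
      (h1.mul_cexp_neg_mul_sq (by fun_prop) hre₁ hη.le)
      (h2.mul_cexp_neg_mul_sq (by fun_prop) hre₂ hη.le)
      (tendsto_arcIntegral_mul_cexp_neg_mul_sq hγ hη hq fun R hR α hα => by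
        simpa only [circleMap_zero, mul_comm (α : ℂ)] using hbound R hR α hα)
  refine tendsto_nhds_unique (tendsto_integral_mul_cexp_neg_mul_sq h1 (by fun_prop) hre₁) ?_
  exact ((tendsto_integral_mul_cexp_neg_mul_sq h2 (by fun_prop) hre₂).const_mul w).congr'
    (eventually_nhdsWithin_of_forall fun η hη => (hdamped η hη).symm)

theorem fresnel_contour_rotation (g : ℂ → ℂ) (hg : Differentiable ℂ g)
    (γ c : ℝ) (hγ : 0 < γ) (hc : 0 < c) (q : ℝ → ℝ)
    (hq : ∃ C : ℝ, ∃ k : ℕ, ∀ R : ℝ, 0 ≤ R → |q R| ≤ C * (1 + R) ^ k)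
    (hbound : ∀ R : ℝ, 0 < R → ∀ α ∈ Set.Icc (0 : ℝ) (Real.pi / 4),
        ‖g ((R : ℂ) * Complex.exp (Complex.I * (α : ℂ)))‖
          ≤ q R * Real.exp (c * R) * Real.exp (-γ * R ^ 2 * Real.sin (2 * α)) * R)
    (h1 : MeasureTheory.IntegrableOn (fun u : ℝ => g (u : ℂ)) (Set.Ioi 0))
    (h2 : MeasureTheory.IntegrableOn
        (fun u : ℝ => g ((u : ℂ) * Complex.exp (Complex.I * (Real.pi : ℂ) / 4))) (Set.Ioi 0)) :
    ∫ u in Set.Ioi (0 : ℝ), g (u : ℂ)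
      = Complex.exp (Complex.I * (Real.pi : ℂ) / 4) *
          ∫ u in Set.Ioi (0 : ℝ), g ((u : ℂ) * Complex.exp (Complex.I * (Real.pi : ℂ) / 4)) :=
  fresnel_contour_rotation_general g hg γ c hγ q hq hbound h1 h2
end
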